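/- Let G be a finite group and C ≠ S a non-critical closed twin class of P(G). Then C is of compound type if and only if there exist a prime p and integers r ≥ 2 and 0 ≤ s ≤ r−2 with |C| = p^r − p^s and |Ĉ| = p^r. -/

import Mathlib

/-- Closed neighbourhood of a vertex. -/
def closedNbhd {V : Type*} (Γ : SimpleGraph V) (x : V) : Set V := {y | Γ.Adj x y} ∪ {x}

/-- Closed neighbourhood of a set of vertices (intersection convention; N[∅] = univ). -/
def closedNbhdSet {V : Type*} (Γ : SimpleGraph V) (X : Set V) : Set V :=
  ⋂ x ∈ X, closedNbhd Γ x

/-- Neighbourhood closure X̂ = N[N[X]]. -/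
def nbhdClosure {V : Type*} (Γ : SimpleGraph V) (X : Set V) : Set V :=
  closedNbhdSet Γ (closedNbhdSet Γ X)

/-- Closed twin class of a vertex. -/
def twinClass {V : Type*} (Γ : SimpleGraph V) (y : V) : Set V :=
  {x | closedNbhd Γ x = closedNbhd Γ y}

/-- The power graph of a group. -/
def powerGraph (G : Type*) [Group G] : SimpleGraph G where
  Adj x y := x ≠ y ∧ ((∃ m : ℕ, 0 < m ∧ y = x ^ m) ∨ (∃ m : ℕ, 0 < m ∧ x = y ^ m))
  symm := by constructor; rintro x y ⟨h, h2⟩; exact ⟨h.symm, h2.symm⟩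
  loopless := by constructor; rintro x ⟨h, _⟩; exact h rfl

/-- The ⋄-class of an element: elements generating the same cyclic subgroup. -/
def diamondClass {G : Type*} [Group G] (y : G) : Set G :=
  {x | Subgroup.zpowers x = Subgroup.zpowers y}

/-- A critical class: Ĉ = C ∪̇ {1} and |Ĉ| = p^r for a prime p and r ≥ 2. -/
def IsCritical {G : Type*} [Group G] (P : SimpleGraph G) (C : Set G) : Prop :=
  nbhdClosure P C = C ∪ {1} ∧ (1 : G) ∉ C ∧
    ∃ p r : ℕ, p.Prime ∧ 2 ≤ r ∧ (nbhdClosure P C).ncard = p ^ r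

/-!
A closed neighbourhood in `P(G)` consists of the elements `u` with `⟨u⟩ ≤ ⟨x⟩` or `⟨x⟩ ≤ ⟨u⟩`.
If a twin class `C` contains `y` with `1 < ⟨y⟩ < ⟨x⟩`, then `⟨y⟩` is comparable with every
subgroup of the cyclic group `⟨x⟩`, which forces `|x|` to be a prime power `p ^ r`. Then `⟨x⟩` is
a chain, `C` consists of the elements of `⟨x⟩` of order at least `p ^ (s + 1)`, and `Ĉ = ⟨x⟩`.

Conversely, let `C` be a single ⋄-class `[w]` with `|C| = p ^ r - p ^ s` and `|Ĉ| = p ^ r`. For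
`z ∈ Ĉ` with `⟨z⟩ > ⟨w⟩` the generators of `⟨z⟩` lie in `Ĉ \ C`, and there are
`φ(|z|) ≥ φ(|w|) = |C| > |Ĉ \ C|` of them; hence `Ĉ ⊆ ⟨w⟩`. If `C` is not critical, an element
of `Ĉ \ (C ∪ {1})` makes `|w|` a prime power as above, hence `Ĉ = ⟨w⟩` and
`|C| = φ(p ^ r) = p ^ r - p ^ (r - 1)`, contradicting `s ≤ r - 2`.
-/

open Subgroup

theorem Nat.exists_prime_pow_eq_of_forall_dvd_or_dvd {n d : ℕ} (hn : n ≠ 0) (hdn : d ∣ n)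
    (hd : d ≠ 1) (hdn' : d ≠ n) (h : ∀ e, e ∣ n → e ∣ d ∨ d ∣ e) :
    ∃ p r : ℕ, p.Prime ∧ n = p ^ r := by
  set p := d.minFac
  have hp : p.Prime := Nat.minFac_prime hd
  have hpb : p.Coprime (ordCompl[p] n) := Nat.coprime_ordCompl hp hn
  have hab : ordProj[p] n * ordCompl[p] n = n := Nat.ordProj_mul_ordCompl_eq_self n p
  have hbd : ordCompl[p] n ∣ d := (h _ (Nat.ordCompl_dvd n p)).resolve_right
    fun hdb => hp.coprime_iff_not_dvd.1 hpb ((Nat.minFac_dvd d).trans hdb)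
  refine ⟨p, n.factorization p, hp, ?_⟩
  rcases h _ (Nat.ordProj_dvd n p) with had | hda
  · exact absurd (Nat.dvd_antisymm hdn (hab ▸ (hpb.pow_left _).mul_dvd_of_dvd_of_dvd had hbd)) hdn'
  · rw [(hpb.pow_left _).symm.eq_one_of_dvd (hbd.trans hda), mul_one] at hab
    exact hab.symm

theorem Nat.totient_prime_pow_ne_sub_pow {p r s : ℕ} (hp : p.Prime) (hsr : s + 1 < r) :
    (p ^ r).totient ≠ p ^ r - p ^ s := by
  obtain ⟨k, rfl⟩ : ∃ k, r = k + 1 := ⟨r - 1, by omega⟩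
  rw [Nat.totient_prime_pow_succ hp, Nat.mul_sub_one, ← pow_succ]
  have h1 : p ^ s < p ^ k := Nat.pow_lt_pow_right hp.one_lt (by omega)
  have h2 : p ^ k < p ^ (k + 1) := Nat.pow_lt_pow_right hp.one_lt (by omega)
  omega

section Graph

variable {V : Type*} (Γ : SimpleGraph V)

theorem self_mem_closedNbhd (x : V) : x ∈ closedNbhd Γ x := Or.inr rfl

theorem mem_closedNbhd_comm {x y : V} : y ∈ closedNbhd Γ x ↔ x ∈ closedNbhd Γ y := by
  simp only [closedNbhd, Set.mem_union, Set.mem_ofPred_eq, Set.mem_singleton_iff, Γ.adj_comm,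
    eq_comm]

theorem self_mem_twinClass (w : V) : w ∈ twinClass Γ w := rfl

theorem twinClass_eq_of_mem {v w : V} (h : v ∈ twinClass Γ w) : twinClass Γ v = twinClass Γ w := by
  have h' : closedNbhd Γ v = closedNbhd Γ w := h
  ext u
  simp only [twinClass, Set.mem_ofPred_eq, h']

theorem mem_closedNbhd_of_mem_twinClass {v x w : V} (hv : v ∈ twinClass Γ w)
    (hx : x ∈ twinClass Γ w) : v ∈ closedNbhd Γ x := by
  rw [show closedNbhd Γ x = closedNbhd Γ v from hx.trans hv.symm]
  exact self_mem_closedNbhd Γ v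

theorem closedNbhdSet_twinClass (w : V) : closedNbhdSet Γ (twinClass Γ w) = closedNbhd Γ w := by
  ext u
  simp only [closedNbhdSet, Set.mem_iInter]
  exact ⟨fun h => h w (self_mem_twinClass Γ w),
    fun hu v (hv : closedNbhd Γ v = closedNbhd Γ w) => hv ▸ hu⟩

theorem mem_nbhdClosure_twinClass {w z : V} :
    z ∈ nbhdClosure Γ (twinClass Γ w) ↔ closedNbhd Γ w ⊆ closedNbhd Γ z := by
  rw [nbhdClosure, closedNbhdSet_twinClass]
  simp only [closedNbhdSet, Set.mem_iInter]
  exact ⟨fun h _ hu => (mem_closedNbhd_comm Γ).1 (h _ hu),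
    fun h _ hu => (mem_closedNbhd_comm Γ).1 (h hu)⟩

theorem subset_nbhdClosure (X : Set V) : X ⊆ nbhdClosure Γ X := by
  intro x hx
  simp only [nbhdClosure, closedNbhdSet, Set.mem_iInter]
  exact fun u hu => (mem_closedNbhd_comm Γ).1 (hu x hx)

end Graph

section CyclicSubgroups

variable {G : Type*} [Group G]

theorem ncard_zpowers (x : G) : (zpowers x : Set G).ncard = orderOf x := by
  rw [← Nat.card_coe_set_eq, SetLike.coe_sort_coe, Nat.card_zpowers]

variable [Finite G]

theorem exists_pos_pow_eq_iff_mem_zpowers {x y : G} :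
    (∃ m : ℕ, 0 < m ∧ y = x ^ m) ↔ y ∈ zpowers x := by
  rw [← mem_powers_iff_mem_zpowers]
  constructor
  · rintro ⟨m, -, rfl⟩
    exact ⟨m, rfl⟩
  · rintro ⟨m, rfl⟩
    exact ⟨m + orderOf x, by have := orderOf_pos x; omega,
      by rw [pow_add, pow_orderOf_eq_one, mul_one]⟩

theorem zpowers_eq_of_mem_of_orderOf_eq {u v : G} (h : u ∈ zpowers v)
    (huv : orderOf u = orderOf v) : zpowers u = zpowers v :=
  eq_of_le_of_card_ge (zpowers_le.2 h) (by rw [Nat.card_zpowers, Nat.card_zpowers, huv])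

theorem exists_mem_zpowers_orderOf_eq {x : G} {e : ℕ} (he : e ∣ orderOf x) :
    ∃ u ∈ zpowers x, orderOf u = e :=
  ⟨x ^ (orderOf x / e), pow_mem (mem_zpowers x) _, orderOf_pow_orderOf_div (orderOf_pos x).ne' he⟩

theorem mem_zpowers_pow_of_pow_eq_one {x g : G} {e : ℕ} (he : e ∣ orderOf x)
    (hg : g ∈ zpowers x) (hge : g ^ e = 1) : g ∈ zpowers (x ^ (orderOf x / e)) := by
  obtain ⟨i, rfl⟩ := (Submonoid.mem_powers_iff _ _).1 (mem_powers_iff_mem_zpowers.2 hg)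
  have hxe : orderOf x ∣ i * e := orderOf_dvd_of_pow_eq_one (by rwa [← pow_mul] at hge)
  obtain ⟨k, rfl⟩ : orderOf x / e ∣ i := Nat.dvd_of_mul_dvd_mul_right
    (Nat.pos_of_dvd_of_pos he (orderOf_pos x)) (by rwa [Nat.div_mul_cancel he])
  rw [pow_mul]
  exact pow_mem (mem_zpowers _) k

theorem mem_zpowers_iff_orderOf_dvd {x u v : G} (hu : u ∈ zpowers x) (hv : v ∈ zpowers x) :
    u ∈ zpowers v ↔ orderOf u ∣ orderOf v := by
  refine ⟨orderOf_dvd_of_mem_zpowers, fun h => ?_⟩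
  have hvx : orderOf v ∣ orderOf x := orderOf_dvd_of_mem_zpowers hv
  have hgen : zpowers v = zpowers (x ^ (orderOf x / orderOf v)) :=
    zpowers_eq_of_mem_of_orderOf_eq (mem_zpowers_pow_of_pow_eq_one hvx hv (pow_orderOf_eq_one v))
      (orderOf_pow_orderOf_div (orderOf_pos x).ne' hvx).symm
  rw [hgen]
  exact mem_zpowers_pow_of_pow_eq_one hvx hu (orderOf_dvd_iff_pow_eq_one.1 h)

theorem mem_zpowers_or_mem_zpowers_of_orderOf_eq_prime_pow {x u v : G} {p r : ℕ}
    (hp : p.Prime) (hx : orderOf x = p ^ r) (hu : u ∈ zpowers x) (hv : v ∈ zpowers x) :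
    u ∈ zpowers v ∨ v ∈ zpowers u := by
  obtain ⟨a, -, ha⟩ := (Nat.dvd_prime_pow hp).1 (hx ▸ orderOf_dvd_of_mem_zpowers hu)
  obtain ⟨b, -, hb⟩ := (Nat.dvd_prime_pow hp).1 (hx ▸ orderOf_dvd_of_mem_zpowers hv)
  rw [mem_zpowers_iff_orderOf_dvd hu hv, mem_zpowers_iff_orderOf_dvd hv hu, ha, hb]
  exact (le_total a b).imp (Nat.pow_dvd_pow p) (Nat.pow_dvd_pow p)

theorem diamondClass_eq (z : G) :
    diamondClass z = {g | g ∈ zpowers z ∧ orderOf g = orderOf z} := by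
  ext g
  change zpowers g = zpowers z ↔ _
  exact ⟨fun hg => ⟨hg ▸ mem_zpowers g, by rw [← Nat.card_zpowers, hg, Nat.card_zpowers]⟩,
    fun ⟨hg, hgz⟩ => zpowers_eq_of_mem_of_orderOf_eq hg hgz⟩

theorem ncard_diamondClass (z : G) : (diamondClass z).ncard = (orderOf z).totient := by
  classical
  have := Fintype.ofFinite G
  rw [← IsCyclic.card_orderOf_eq_totient (α := zpowers z) (by rw [Fintype.card_zpowers]),
    ← Fintype.card_subtype, ← Nat.card_eq_fintype_card, diamondClass_eq, ← Nat.card_coe_set_eq]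
  exact Nat.card_congr ((Equiv.subtypeSubtypeEquivSubtypeInter (· ∈ zpowers z)
    (fun g => orderOf g = orderOf z)).symm.trans (Equiv.subtypeEquivRight fun g => by simp))

end CyclicSubgroups

section PowerGraph

variable {G : Type*} [Group G] [Finite G]

theorem mem_closedNbhd_powerGraph {x y : G} :
    y ∈ closedNbhd (powerGraph G) x ↔ y ∈ zpowers x ∨ x ∈ zpowers y := by
  simp only [closedNbhd, powerGraph, Set.mem_union, Set.mem_ofPred_eq, Set.mem_singleton_iff,
    exists_pos_pow_eq_iff_mem_zpowers]
  by_cases hxy : y = x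
  · simp [hxy, mem_zpowers]
  · simp [hxy, Ne.symm hxy]

theorem zpowers_subset_closedNbhd (x : G) : (zpowers x : Set G) ⊆ closedNbhd (powerGraph G) x :=
  fun _ hu => mem_closedNbhd_powerGraph.2 (Or.inl hu)

theorem mem_closedNbhd_powerGraph_one (u : G) : u ∈ closedNbhd (powerGraph G) 1 :=
  mem_closedNbhd_powerGraph.2 (Or.inr (one_mem _))

theorem closedNbhd_powerGraph_congr {a b : G} (h : zpowers a = zpowers b) :
    closedNbhd (powerGraph G) a = closedNbhd (powerGraph G) b := by
  ext u
  simp only [mem_closedNbhd_powerGraph, ← zpowers_le, h]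

theorem diamondClass_subset_twinClass (w : G) : diamondClass w ⊆ twinClass (powerGraph G) w :=
  fun _ hg => closedNbhd_powerGraph_congr hg

theorem closedNbhd_subset_of_orderOf_eq_prime_pow {x v : G} {p r : ℕ} (hp : p.Prime)
    (hx : orderOf x = p ^ r) (hv : v ∈ zpowers x) :
    closedNbhd (powerGraph G) x ⊆ closedNbhd (powerGraph G) v := by
  intro u hu
  rw [mem_closedNbhd_powerGraph] at hu ⊢
  rcases hu with hu | hxu
  · exact mem_zpowers_or_mem_zpowers_of_orderOf_eq_prime_pow hp hx hu hv
  · exact Or.inr (zpowers_le.2 hxu hv)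

theorem closedNbhd_subset_union_of_mem_zpowers {x y v : G} (hyv : y ∈ zpowers v)
    (hvx : v ∈ zpowers x) :
    closedNbhd (powerGraph G) v ⊆ closedNbhd (powerGraph G) x ∪ closedNbhd (powerGraph G) y := by
  intro u hu
  rcases mem_closedNbhd_powerGraph.1 hu with huv | hvu
  · exact Or.inl (mem_closedNbhd_powerGraph.2 (Or.inl (zpowers_le.2 hvx huv)))
  · exact Or.inr (mem_closedNbhd_powerGraph.2 (Or.inr (zpowers_le.2 hvu hyv)))

theorem exists_orderOf_eq_prime_pow_of_subset_closedNbhd {x y : G} (hyx : y ∈ zpowers x)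
    (hy : y ≠ 1) (hyx' : orderOf y ≠ orderOf x)
    (h : (zpowers x : Set G) ⊆ closedNbhd (powerGraph G) y) :
    ∃ p r : ℕ, p.Prime ∧ orderOf x = p ^ r := by
  refine Nat.exists_prime_pow_eq_of_forall_dvd_or_dvd (orderOf_pos x).ne'
    (orderOf_dvd_of_mem_zpowers hyx) (by rwa [Ne, orderOf_eq_one_iff]) hyx' fun e he => ?_
  obtain ⟨u, hu, rfl⟩ := exists_mem_zpowers_orderOf_eq he
  exact (mem_closedNbhd_powerGraph.1 (h hu)).imp orderOf_dvd_of_mem_zpowers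
    orderOf_dvd_of_mem_zpowers

/-- For a prime `q ≠ p` dividing `|z|`, an element of `⟨z⟩` of order `q * |y|` would be adjacent to
`y` but not to `x`. -/
theorem exists_orderOf_eq_prime_pow_of_mem_zpowers {x y z : G} {p r : ℕ} (hp : p.Prime)
    (hx : orderOf x = p ^ r) (hyx : y ∈ zpowers x) (hyx' : orderOf y ≠ orderOf x)
    (hN : closedNbhd (powerGraph G) x = closedNbhd (powerGraph G) y) (hxz : x ∈ zpowers z) :
    ∃ k : ℕ, orderOf z = p ^ k := by
  refine ⟨_, Nat.eq_prime_pow_of_unique_prime_dvd (orderOf_pos z).ne' fun {q} hq hqz => ?_⟩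
  by_contra hqp
  have hyp : orderOf y ∣ p ^ r := hx ▸ orderOf_dvd_of_mem_zpowers hyx
  have hcop : q.Coprime (p ^ r) := ((Nat.coprime_primes hq hp).2 hqp).pow_right r
  have hyz : orderOf y ∣ orderOf z :=
    (orderOf_dvd_of_mem_zpowers hyx).trans (orderOf_dvd_of_mem_zpowers hxz)
  obtain ⟨u, hu, hu_ord⟩ :=
    exists_mem_zpowers_orderOf_eq ((hcop.coprime_dvd_right hyp).mul_dvd_of_dvd_of_dvd hqz hyz)
  have hyu : y ∈ zpowers u := (mem_zpowers_iff_orderOf_dvd (zpowers_le.2 hxz hyx) hu).2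
    (hu_ord ▸ dvd_mul_left _ _)
  have hux : u ∈ closedNbhd (powerGraph G) x := by
    rw [hN]
    exact mem_closedNbhd_powerGraph.2 (Or.inr hyu)
  rcases mem_closedNbhd_powerGraph.1 hux with hux | hxu
  · have hqx : q ∣ p ^ r := hx ▸ (hu_ord ▸ dvd_mul_right q _).trans (orderOf_dvd_of_mem_zpowers hux)
    exact hq.one_lt.ne' (hcop.eq_one_of_dvd hqx)
  · have hxy : p ^ r ∣ orderOf y :=
      hcop.symm.dvd_of_dvd_mul_left (hx ▸ hu_ord ▸ orderOf_dvd_of_mem_zpowers hxu)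
    exact hyx' (Nat.dvd_antisymm (orderOf_dvd_of_mem_zpowers hyx) (hx ▸ hxy))

end PowerGraph

section TwinClass

variable {G : Type*} [Group G]

def IsCompound (C : Set G) : Prop :=
  ∃ a ∈ C, ∃ b ∈ C, zpowers a ≠ zpowers b

variable [Finite G]

theorem one_mem_nbhdClosure_twinClass (w : G) :
    (1 : G) ∈ nbhdClosure (powerGraph G) (twinClass (powerGraph G) w) :=
  (mem_nbhdClosure_twinClass _).2 fun u _ => mem_closedNbhd_powerGraph_one u

theorem zpowers_subset_nbhdClosure_twinClass {w x : G} {p r : ℕ} (hp : p.Prime)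
    (hx : x ∈ twinClass (powerGraph G) w) (hxr : orderOf x = p ^ r) :
    (zpowers x : Set G) ⊆ nbhdClosure (powerGraph G) (twinClass (powerGraph G) w) := by
  intro v hv
  rw [mem_nbhdClosure_twinClass, ← show closedNbhd (powerGraph G) x = _ from hx]
  exact closedNbhd_subset_of_orderOf_eq_prime_pow hp hxr hv

theorem twinClass_subset_zpowers_of_forall_orderOf_le {w x : G}
    (hx : x ∈ twinClass (powerGraph G) w)
    (hmax : ∀ v ∈ twinClass (powerGraph G) w, orderOf v ≤ orderOf x) :
    twinClass (powerGraph G) w ⊆ zpowers x := by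
  intro v hv
  rcases mem_closedNbhd_powerGraph.1 (mem_closedNbhd_of_mem_twinClass _ hv hx) with hvx | hxv
  · exact hvx
  · have hord : orderOf x = orderOf v := le_antisymm
      (Nat.le_of_dvd (orderOf_pos v) (orderOf_dvd_of_mem_zpowers hxv)) (hmax v hv)
    exact zpowers_eq_of_mem_of_orderOf_eq hxv hord ▸ mem_zpowers v

theorem mem_twinClass_of_mem_zpowers {w x y v : G} {p r : ℕ} (hp : p.Prime)
    (hx : x ∈ twinClass (powerGraph G) w) (hy : y ∈ twinClass (powerGraph G) w)
    (hxr : orderOf x = p ^ r) (hyv : y ∈ zpowers v) (hvx : v ∈ zpowers x) :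
    v ∈ twinClass (powerGraph G) w := by
  have hx' : closedNbhd (powerGraph G) x = closedNbhd (powerGraph G) w := hx
  have hy' : closedNbhd (powerGraph G) y = closedNbhd (powerGraph G) w := hy
  refine subset_antisymm ?_ (hx' ▸ closedNbhd_subset_of_orderOf_eq_prime_pow hp hxr hvx)
  simpa only [hx', hy', Set.union_self] using closedNbhd_subset_union_of_mem_zpowers hyv hvx

theorem ncard_twinClass_of_orderOf_eq_prime_pow {w x y : G} {p r s : ℕ} (hp : p.Prime)
    (hx : x ∈ twinClass (powerGraph G) w) (hxr : orderOf x = p ^ r)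
    (hCx : twinClass (powerGraph G) w ⊆ zpowers x) (hy : y ∈ twinClass (powerGraph G) w)
    (hys : orderOf y = p ^ (s + 1))
    (hmin : ∀ v ∈ twinClass (powerGraph G) w, orderOf y ≤ orderOf v) (hsr : s ≤ r) :
    (twinClass (powerGraph G) w).ncard = p ^ r - p ^ s := by
  obtain ⟨u, hux, hu⟩ := exists_mem_zpowers_orderOf_eq (hxr ▸ Nat.pow_dvd_pow p hsr)
  have hC : twinClass (powerGraph G) w = (zpowers x : Set G) \ zpowers u := by
    ext v
    refine ⟨fun hv => ⟨hCx hv, fun hvu => ?_⟩, fun ⟨hvx, hvu⟩ => ?_⟩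
    · have hvs : orderOf v ≤ p ^ s :=
        Nat.le_of_dvd (pow_pos hp.pos s) (hu ▸ orderOf_dvd_of_mem_zpowers hvu)
      have hyv := (hmin v hv).trans hvs
      rw [hys] at hyv
      exact (Nat.pow_lt_pow_right hp.one_lt s.lt_succ_self).not_ge hyv
    · obtain ⟨a, -, hva⟩ := (Nat.dvd_prime_pow hp).1 (hxr ▸ orderOf_dvd_of_mem_zpowers hvx)
      rw [SetLike.mem_coe, mem_zpowers_iff_orderOf_dvd hvx hux, hva, hu,
        Nat.pow_dvd_pow_iff_le_right hp.one_lt] at hvu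
      refine mem_twinClass_of_mem_zpowers hp hx hy hxr ?_ hvx
      rw [mem_zpowers_iff_orderOf_dvd (hCx hy) hvx, hys, hva]
      exact Nat.pow_dvd_pow p (by omega)
  rw [hC, Set.ncard_sdiff (SetLike.coe_subset_coe.2 (zpowers_le.2 hux)), ncard_zpowers,
    ncard_zpowers, hxr, hu]

theorem nbhdClosure_twinClass_eq_zpowers {w x y : G} {p r : ℕ} (hp : p.Prime)
    (hx : x ∈ twinClass (powerGraph G) w) (hxr : orderOf x = p ^ r)
    (hCx : twinClass (powerGraph G) w ⊆ zpowers x) (hy : y ∈ twinClass (powerGraph G) w)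
    (hyx : orderOf y ≠ orderOf x) :
    nbhdClosure (powerGraph G) (twinClass (powerGraph G) w) = zpowers x := by
  have hx' : closedNbhd (powerGraph G) x = closedNbhd (powerGraph G) w := hx
  refine subset_antisymm (fun z hz => ?_) (zpowers_subset_nbhdClosure_twinClass hp hx hxr)
  rw [mem_nbhdClosure_twinClass, ← hx'] at hz
  rcases mem_closedNbhd_powerGraph.1 (hz (self_mem_closedNbhd _ x)) with hxz | hzx
  · obtain ⟨k, hzk⟩ := exists_orderOf_eq_prime_pow_of_mem_zpowers hp hxr (hCx hy) hyx
      (hx.trans hy.symm) hxz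
    have hzx : closedNbhd (powerGraph G) z = closedNbhd (powerGraph G) x :=
      subset_antisymm (closedNbhd_subset_of_orderOf_eq_prime_pow hp hzk hxz) hz
    exact hCx (hzx.trans hx')
  · exact hzx

theorem IsCompound.exists_prime_pow {w : G} (h1 : (1 : G) ∉ twinClass (powerGraph G) w)
    (hcomp : IsCompound (twinClass (powerGraph G) w)) :
    ∃ p r s : ℕ, p.Prime ∧ 2 ≤ r ∧ s ≤ r - 2 ∧
      (twinClass (powerGraph G) w).ncard = p ^ r - p ^ s ∧
      (nbhdClosure (powerGraph G) (twinClass (powerGraph G) w)).ncard = p ^ r := by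
  set C := twinClass (powerGraph G) w
  have hwC : w ∈ C := self_mem_twinClass _ w
  obtain ⟨x, hx, hmax⟩ := Set.exists_max_image C orderOf C.toFinite ⟨w, hwC⟩
  obtain ⟨y, hy, hmin⟩ := Set.exists_min_image C orderOf C.toFinite ⟨w, hwC⟩
  have hCx : C ⊆ zpowers x := twinClass_subset_zpowers_of_forall_orderOf_le hx hmax
  have hyx : orderOf y ≠ orderOf x := by
    intro hyx
    have hgen : ∀ v ∈ C, zpowers v = zpowers x := fun v hv =>
      zpowers_eq_of_mem_of_orderOf_eq (hCx hv) (le_antisymm (hmax v hv) (hyx ▸ hmin v hv))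
    obtain ⟨a, ha, b, hb, hab⟩ := hcomp
    exact hab ((hgen a ha).trans (hgen b hb).symm)
  have hy1 : y ≠ 1 := fun h => h1 (h ▸ hy)
  obtain ⟨p, r, hp, hxr⟩ := exists_orderOf_eq_prime_pow_of_subset_closedNbhd (hCx hy) hy1 hyx
    ((zpowers_subset_closedNbhd x).trans (hx.trans hy.symm).le)
  obtain ⟨t, htr, hyt⟩ := (Nat.dvd_prime_pow hp).1 (hxr ▸ orderOf_dvd_of_mem_zpowers (hCx hy))
  obtain ⟨s, rfl⟩ : ∃ s, t = s + 1 := Nat.exists_eq_succ_of_ne_zero fun ht =>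
    hy1 (orderOf_eq_one_iff.1 (by rw [hyt, ht, pow_zero]))
  have hsr : s + 1 < r := htr.lt_of_ne fun h => hyx (by rw [hyt, hxr, h])
  refine ⟨p, r, s, hp, by omega, by omega,
    ncard_twinClass_of_orderOf_eq_prime_pow hp hx hxr hCx hy hyt hmin (by omega), ?_⟩
  rw [nbhdClosure_twinClass_eq_zpowers hp hx hxr hCx hy hyx, ncard_zpowers, hxr]

theorem nbhdClosure_twinClass_subset_zpowers {w : G}
    (hC : twinClass (powerGraph G) w ⊆ diamondClass w)
    (hlt : (nbhdClosure (powerGraph G) (twinClass (powerGraph G) w) \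
      twinClass (powerGraph G) w).ncard < (twinClass (powerGraph G) w).ncard) :
    nbhdClosure (powerGraph G) (twinClass (powerGraph G) w) ⊆ zpowers w := by
  intro z hz
  have hwz : closedNbhd (powerGraph G) w ⊆ closedNbhd (powerGraph G) z :=
    (mem_nbhdClosure_twinClass _).1 hz
  rcases mem_closedNbhd_powerGraph.1 (hwz (self_mem_closedNbhd _ w)) with hwz' | hzw
  · by_contra hzw
    have hdiam : diamondClass z ⊆
        nbhdClosure (powerGraph G) (twinClass (powerGraph G) w) \ twinClass (powerGraph G) w :=
      fun g (hg : zpowers g = zpowers z) =>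
        ⟨(mem_nbhdClosure_twinClass _).2 (hwz.trans (closedNbhd_powerGraph_congr hg).ge),
          fun hgC => hzw (by rw [← hg.symm.trans (hC hgC)]; exact mem_zpowers z)⟩
    have hle : (twinClass (powerGraph G) w).ncard ≤ (diamondClass z).ncard := by
      rw [subset_antisymm hC (diamondClass_subset_twinClass w), ncard_diamondClass,
        ncard_diamondClass]
      exact Nat.le_of_dvd (Nat.totient_pos.2 (orderOf_pos z))
        (Nat.totient_dvd_of_dvd (orderOf_dvd_of_mem_zpowers hwz'))
    exact (hlt.trans_le (hle.trans (Set.ncard_le_ncard hdiam))).false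
  · exact hzw

theorem isCritical_of_not_isCompound {w : G} {p r s : ℕ}
    (h1 : (1 : G) ∉ twinClass (powerGraph G) w) (hcomp : ¬ IsCompound (twinClass (powerGraph G) w))
    (hp : p.Prime) (hr : 2 ≤ r) (hs : s ≤ r - 2)
    (hcard : (twinClass (powerGraph G) w).ncard = p ^ r - p ^ s)
    (hhat : (nbhdClosure (powerGraph G) (twinClass (powerGraph G) w)).ncard = p ^ r) :
    IsCritical (powerGraph G) (twinClass (powerGraph G) w) := by
  set C := twinClass (powerGraph G) w
  refine ⟨?_, h1, p, r, hp, hr, hhat⟩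
  have hwC : w ∈ C := self_mem_twinClass _ w
  have hCdiam : C = diamondClass w := by
    refine subset_antisymm (fun v hv => ?_) (diamondClass_subset_twinClass w)
    by_contra hvw
    exact hcomp ⟨v, hv, w, hwC, hvw⟩
  have hsub : C ∪ {1} ⊆ nbhdClosure (powerGraph G) C := Set.union_subset
    (subset_nbhdClosure _ C) (Set.singleton_subset_iff.2 (one_mem_nbhdClosure_twinClass w))
  by_contra hne
  obtain ⟨z, hz, hzC1⟩ := Set.not_subset.1 fun h => hne (subset_antisymm h hsub)
  have hlt : (nbhdClosure (powerGraph G) C \ C).ncard < C.ncard := by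
    have hps : 2 * p ^ s < p ^ r := calc
      2 * p ^ s ≤ p * p ^ s := Nat.mul_le_mul_right _ hp.two_le
      _ = p ^ (s + 1) := (pow_succ' p s).symm
      _ < p ^ r := Nat.pow_lt_pow_right hp.one_lt (by omega)
    rw [Set.ncard_sdiff (subset_nbhdClosure _ C), hhat, hcard]
    omega
  have hĈw := nbhdClosure_twinClass_subset_zpowers hCdiam.le hlt
  have hzw : z ∈ zpowers w := hĈw hz
  have hzw' : orderOf z ≠ orderOf w := fun h =>
    hzC1 (Or.inl (hCdiam ▸ zpowers_eq_of_mem_of_orderOf_eq hzw h))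
  obtain ⟨q, k, hq, hwq⟩ := exists_orderOf_eq_prime_pow_of_subset_closedNbhd hzw
    (fun h => hzC1 (Or.inr h)) hzw'
    ((zpowers_subset_closedNbhd w).trans ((mem_nbhdClosure_twinClass _).1 hz))
  have hĈ : nbhdClosure (powerGraph G) C = zpowers w :=
    subset_antisymm hĈw (zpowers_subset_nbhdClosure_twinClass hq hwC hwq)
  have hφ : (orderOf w).totient = p ^ r - p ^ s := by rw [← ncard_diamondClass, ← hCdiam, hcard]
  rw [← ncard_zpowers, ← hĈ, hhat] at hφ
  exact Nat.totient_prime_pow_ne_sub_pow hp (by omega) hφ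

end TwinClass

theorem stmt15 {G : Type*} [Group G] [Fintype G] (C : Set G) (w : G)
    (hC : C = twinClass (powerGraph G) w)
    (hS : C ≠ twinClass (powerGraph G) 1)
    (hncrit : ¬ IsCritical (powerGraph G) C) :
    (∃ a ∈ C, ∃ b ∈ C, Subgroup.zpowers a ≠ Subgroup.zpowers b) ↔
      ∃ p r s : ℕ, p.Prime ∧ 2 ≤ r ∧ s ≤ r - 2 ∧
        C.ncard = p ^ r - p ^ s ∧ (nbhdClosure (powerGraph G) C).ncard = p ^ r := by
  subst hC
  have h1 : (1 : G) ∉ twinClass (powerGraph G) w := fun h => hS (twinClass_eq_of_mem _ h).symm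
  refine ⟨IsCompound.exists_prime_pow h1, fun ⟨p, r, s, hp, hr, hs, hcard, hhat⟩ => ?_⟩
  by_contra hcomp
  exact hncrit (isCritical_of_not_isCompound h1 hcomp hp hr hs hcard hhat)
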